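/- For the rank-one root system A_1 with positive root α: for integers k ≥ 1, N ≥ 1 and 0 ≤ j < N, set m = kN + j. In the partially ordered set P^+(m,N) of N-tuples of nonnegative integers summing to m, ordered by λ̄ ⪯ μ̄ iff for every 1 ≤ p ≤ N the minimum over p-element subsets of the coordinate sums of λ̄ is at most the corresponding minimum for μ̄, the tuple (k,…,k,k+1,…,k+1) (with N−j entries equal to k and j entries equal to k+1) is the unique maximal element up to permutation. -/

import Mathlib

/-- `rmin p λ̄` is the minimum, over all `p`-element subsets
`{i_1 < ⋯ < i_p} ⊆ {1,…,N}`, of `λ_{i_1} + ⋯ + λ_{i_p}`. -/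
noncomputable def rmin {N : ℕ} (p : ℕ) (lam : Fin N → ℕ) : ℕ :=
  sInf {m | ∃ s : Finset (Fin N), s.card = p ∧ ∑ i ∈ s, lam i = m}

/-- The partial order `λ̄ ⪯ μ̄` on `N`-tuples of nonnegative integers:
`rmin p λ̄ ≤ rmin p μ̄` for all `1 ≤ p ≤ N`. -/
def tupleLE {N : ℕ} (lam mu : Fin N → ℕ) : Prop :=
  ∀ p, 1 ≤ p → p ≤ N → rmin p lam ≤ rmin p mu

/-! Let `λ̄` be the balanced tuple. Since `r₁(λ̄) = k`, every entry of `μ̄` is at least `k`.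
If more than `N - j` entries of `μ̄` were equal to `k`, then `r_{N-j+1}(μ̄) = k(N-j+1)`, while
any `N-j+1` entries of `λ̄` include a `k+1`, so `r_{N-j+1}(λ̄) > k(N-j+1)`. Hence at least `j`
entries of `μ̄` exceed `k`, and as the excess `∑ (μᵢ - k)` is exactly `j`, each of them is `k+1`. -/

open Finset

section sum

variable {ι : Type*} {s : Finset ι} {f : ι → ℕ} {k : ℕ}

theorem mul_card_add_card_filter_lt_eq_sum (k : ℕ) (s : Finset ι) (f : ι → ℕ) :
    k * #s + #{i ∈ s | k < f i} = ∑ i ∈ s, (k + if k < f i then 1 else 0) := by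
  rw [sum_add_distrib, sum_const, smul_eq_mul, mul_comm, card_filter]

theorem mul_card_add_card_filter_lt_le_sum (hf : ∀ i ∈ s, k ≤ f i) :
    k * #s + #{i ∈ s | k < f i} ≤ ∑ i ∈ s, f i := by
  rw [mul_card_add_card_filter_lt_eq_sum]
  refine sum_le_sum fun i hi => ?_
  have := hf i hi
  split <;> omega

theorem mul_card_add_card_filter_lt_lt_sum (hf : ∀ i ∈ s, k ≤ f i) {i₀ : ι} (hi₀ : i₀ ∈ s)
    (hlt : k + 1 < f i₀) : k * #s + #{i ∈ s | k < f i} < ∑ i ∈ s, f i := by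
  rw [mul_card_add_card_filter_lt_eq_sum]
  refine sum_lt_sum (fun i hi => ?_) ⟨i₀, hi₀, by split <;> omega⟩
  have := hf i hi
  split <;> omega

end sum

section rmin

variable {N p k : ℕ} {f : Fin N → ℕ}

theorem rmin_le_sum {s : Finset (Fin N)} (hs : #s = p) : rmin p f ≤ ∑ i ∈ s, f i :=
  Nat.sInf_le ⟨s, hs, rfl⟩

theorem rmin_one_le (i : Fin N) : rmin 1 f ≤ f i := by
  simpa using rmin_le_sum (f := f) (card_singleton i)

theorem le_rmin {a : ℕ} (hp : p ≤ N) (h : ∀ s : Finset (Fin N), #s = p → a ≤ ∑ i ∈ s, f i) :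
    a ≤ rmin p f := by
  obtain ⟨s, -, hs⟩ := exists_subset_card_eq (show p ≤ #(univ : Finset (Fin N)) by simpa)
  exact le_csInf ⟨_, s, hs, rfl⟩ (by rintro b ⟨t, ht, rfl⟩; exact h t ht)

theorem rmin_le_mul_of_le_card_filter_le (h : p ≤ #{i | f i ≤ k}) : rmin p f ≤ k * p := by
  obtain ⟨s, hs, rfl⟩ := exists_subset_card_eq h
  calc rmin #s f ≤ ∑ i ∈ s, f i := rmin_le_sum rfl
    _ ≤ #s • k := sum_le_card_nsmul s f k fun i hi => (mem_filter.mp (hs hi)).2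
    _ = k * #s := by rw [smul_eq_mul, mul_comm]

theorem mul_add_sub_card_filter_le_le_rmin (hp : p ≤ N) (hf : ∀ i, k ≤ f i) :
    k * p + (p - #{i | f i ≤ k}) ≤ rmin p f := by
  refine le_rmin hp fun s hs => ?_
  have hsplit := card_filter_add_card_filter_not (s := s) (fun i => k < f i)
  have hle : #{i ∈ s | ¬ k < f i} ≤ #{i | f i ≤ k} :=
    card_le_card fun i hi => by simp only [mem_filter, not_lt] at hi ⊢; exact ⟨mem_univ i, hi.2⟩
  have := mul_card_add_card_filter_lt_le_sum (s := s) fun i _ => hf i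
  rw [hs] at this hsplit
  omega

end rmin

theorem exists_perm_apply_iff_of_card_filter_eq {α : Type*} [Fintype α] {p q : α → Prop}
    [DecidablePred p] [DecidablePred q] (h : #{a | p a} = #{a | q a}) :
    ∃ σ : Equiv.Perm α, ∀ a, q (σ a) ↔ p a := by
  have hcard : Fintype.card {a // p a} = Fintype.card {a // q a} := by
    simpa only [Fintype.card_subtype] using h
  let e : {a // p a} ≃ {a // q a} := Fintype.equivOfCardEq hcard
  let e' : {a // ¬ p a} ≃ {a // ¬ q a} := Fintype.equivOfCardEq <| by
    rw [Fintype.card_subtype_compl, Fintype.card_subtype_compl, hcard]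
  refine ⟨Equiv.subtypeCongr e e', fun a => ?_⟩
  by_cases ha : p a
  · simpa [Equiv.subtypeCongr, Equiv.sumCompl_symm_apply_of_pos ha, ha] using (e ⟨a, ha⟩).2
  · simpa [Equiv.subtypeCongr, Equiv.sumCompl_symm_apply_of_neg ha, ha] using (e' ⟨a, ha⟩).2

section tupleLE

variable {N k : ℕ} {f g : Fin N → ℕ}

theorem le_apply_of_tupleLE (hN : 1 ≤ N) (hf : ∀ i, k ≤ f i) (h : tupleLE f g) (i : Fin N) :
    k ≤ g i :=
  calc k ≤ k * 1 + (1 - #{i | f i ≤ k}) := by omega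
    _ ≤ rmin 1 f := mul_add_sub_card_filter_le_le_rmin hN hf
    _ ≤ rmin 1 g := h 1 le_rfl hN
    _ ≤ g i := rmin_one_le i

theorem card_filter_le_le_of_tupleLE (hf : ∀ i, k ≤ f i) (h : tupleLE f g) :
    #{i | g i ≤ k} ≤ #{i | f i ≤ k} := by
  by_contra! hlt
  have hp : #{i | f i ≤ k} + 1 ≤ N := hlt.trans_le ((card_filter_le _ _).trans (by simp))
  have := (mul_add_sub_card_filter_le_le_rmin hp hf).trans
    ((h _ (by omega) hp).trans (rmin_le_mul_of_le_card_filter_le hlt))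
  omega

end tupleLE

theorem sl2_unique_maximal_general (k N j : ℕ) (hN : 1 ≤ N) (hj : j < N)
    (lam : Fin N → ℕ) (hlam : ∀ i : Fin N, lam i = if (i : ℕ) < N - j then k else k + 1)
    (mu : Fin N → ℕ) (hsum : ∑ i, mu i = k * N + j)
    (hle : tupleLE lam mu) :
    ∃ σ : Equiv.Perm (Fin N), ∀ i, mu (σ i) = lam i := by
  have hlam_ge : ∀ i, k ≤ lam i := fun i => by rw [hlam i]; split <;> omega
  have hlam_le : ∀ i, lam i ≤ k + 1 := fun i => by rw [hlam i]; split <;> omega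
  have hlam_card : #{i | lam i ≤ k} = N - j := by
    rw [filter_congr fun i _ => show lam i ≤ k ↔ (i : ℕ) < N - j by rw [hlam i]; split <;> omega,
      Fin.card_filter_val_lt]
    omega
  have hmu_ge : ∀ i, k ≤ mu i := le_apply_of_tupleLE hN hlam_ge hle
  have hmu_card_le : #{i | mu i ≤ k} ≤ N - j := hlam_card ▸ card_filter_le_le_of_tupleLE hlam_ge hle
  have hcompl : #{i | k < mu i} + #{i | mu i ≤ k} = N := by
    simpa only [not_lt, card_univ, Fintype.card_fin] using
      card_filter_add_card_filter_not (s := univ) fun i => k < mu i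
  have hexcess := mul_card_add_card_filter_lt_le_sum (s := univ) fun i _ => hmu_ge i
  rw [hsum, card_univ, Fintype.card_fin] at hexcess
  have hmu_le : ∀ i, mu i ≤ k + 1 := by
    by_contra! ⟨i, hi⟩
    have := mul_card_add_card_filter_lt_lt_sum (fun i _ => hmu_ge i) (mem_univ i) hi
    rw [hsum, card_univ, Fintype.card_fin] at this
    omega
  obtain ⟨σ, hσ⟩ := exists_perm_apply_iff_of_card_filter_eq
    (p := fun i => lam i ≤ k) (q := fun i => mu i ≤ k) (by omega)
  refine ⟨σ, fun i => ?_⟩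
  have := hσ i
  have := hmu_ge (σ i); have := hmu_le (σ i); have := hlam_ge i; have := hlam_le i
  omega

/-- For `sl₂`: with `m = kN + j`, `0 ≤ j < N`, `k ≥ 1`, the tuple with `N − j`
entries equal to `k` and `j` entries equal to `k+1` is the unique maximal element of
`(P⁺(m,N), ⪯)` up to permutation: any tuple `μ̄` of nonnegative integers summing to
`m` with `(k,…,k,k+1,…,k+1) ⪯ μ̄` is a permutation of `(k,…,k,k+1,…,k+1)`. -/
theorem sl2_unique_maximal (k N j : ℕ) (hk : 1 ≤ k) (hN : 1 ≤ N) (hj : j < N)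
    (lam : Fin N → ℕ) (hlam : ∀ i : Fin N, lam i = if (i : ℕ) < N - j then k else k + 1)
    (mu : Fin N → ℕ) (hsum : ∑ i, mu i = k * N + j)
    (hle : tupleLE lam mu) :
    ∃ σ : Equiv.Perm (Fin N), ∀ i, mu (σ i) = lam i :=
  sl2_unique_maximal_general k N j hN hj lam hlam mu hsum hle
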